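/- arXiv:1402.4087 — 4 statements merged into one kernel-verified Lean document; each statement's English description precedes it below -/
import Mathlib

section
/- Let L be a second-order Lagrangian and φ : ℝ^m → ℝ^n a smooth map. Suppose smooth functions p^i_α, p^I_α : ℝ^m → ℝ (1 ≤ i ≤ m, |I| = 2, 1 ≤ α ≤ n) satisfy, everywhere on ℝ^m: p^I_α = (∂L/∂u^α_I) ∘ j²φ, and Σ_{j=1}^m (1/n(ij)) ∂p^{1_i+1_j}_α/∂x^j + p^i_α − (∂L/∂u^α_i) ∘ j²φ = 0. Then necessarily p^i_α = [∂L/∂u^α_i − Σ_{j=1}^m (1/n(ij)) D_j(∂L/∂u^α_{1_i+1_j})] ∘ j³φ; that is, the momenta coincide with the components of the restricted Legendre map FL of L evaluated along j³φ, so they are uniquely determined by φ. -/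
open scoped BigOperators

noncomputable section

/-- Multi-indices on `Fin m` of total degree `k`. -/
abbrev Idx (m k : ℕ) : Type := { I : Fin m → ℕ // ∑ i, I i = k }

instance (m k : ℕ) : Fintype (Idx m k) :=
  Fintype.subtype (Finset.Nat.antidiagonalTuple m k) fun _ =>
    Finset.Nat.mem_antidiagonalTuple

/-- The multi-index `1_i + 1_j`. -/
def idx2 {m : ℕ} (i j : Fin m) : Idx m 2 :=
  ⟨Pi.single i 1 + Pi.single j 1, by
    simp [Finset.sum_add_distrib, Finset.sum_pi_single']⟩

/-- The multi-index `I + 1_j`. -/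
def Idx.succ {m k : ℕ} (I : Idx m k) (j : Fin m) : Idx m (k + 1) :=
  ⟨I.1 + Pi.single j 1, by
    simp [Finset.sum_add_distrib, I.2, Finset.sum_pi_single']⟩

/-- The combinatorial factor `n(ij)`. -/
def nij {m : ℕ} (i j : Fin m) : ℝ := if i = j then 1 else 2

/-- Partial derivative of `f : ℝ^m → ℝ` in the `i`-th coordinate direction. -/
def pd {m : ℕ} (i : Fin m) (f : (Fin m → ℝ) → ℝ) : (Fin m → ℝ) → ℝ :=
  fun x => fderiv ℝ f x (Pi.single i 1)

/-- Iterated partial derivative `∂^I` associated to a multi-index `I`. -/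
def pdI {m : ℕ} (I : Fin m → ℕ) (f : (Fin m → ℝ) → ℝ) : (Fin m → ℝ) → ℝ :=
  (List.finRange m).foldr (fun i g => (pd i)^[I i] g) f

/-- Second-order jet coordinate space: coordinates `(xⁱ, uᵅ, uᵅᵢ, uᵅ_I)`, `|I| = 2`. -/
abbrev J2 (m n : ℕ) : Type :=
  (Fin m → ℝ) × (Fin n → ℝ) × (Fin m → Fin n → ℝ) × (Idx m 2 → Fin n → ℝ)

/-- Third-order jet coordinate space: additionally `uᵅ_J`, `|J| = 3`. -/
abbrev J3 (m n : ℕ) : Type :=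
  (Fin m → ℝ) × (Fin n → ℝ) × (Fin m → Fin n → ℝ) × (Idx m 2 → Fin n → ℝ) ×
    (Idx m 3 → Fin n → ℝ)

/-- Projection from third-order to second-order jet coordinates. -/
def π32 {m n : ℕ} (w : J3 m n) : J2 m n := (w.1, w.2.1, w.2.2.1, w.2.2.2.1)

/-- Second jet prolongation of `φ : ℝ^m → ℝ^n`. -/
def jet2 {m n : ℕ} (φ : (Fin m → ℝ) → Fin n → ℝ) (x : Fin m → ℝ) : J2 m n :=
  (x, φ x, fun i α => pd i (fun y => φ y α) x, fun I α => pdI I.1 (fun y => φ y α) x)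

/-- Third jet prolongation of `φ : ℝ^m → ℝ^n`. -/
def jet3 {m n : ℕ} (φ : (Fin m → ℝ) → Fin n → ℝ) (x : Fin m → ℝ) : J3 m n :=
  (x, φ x, fun i α => pd i (fun y => φ y α) x,
    fun I α => pdI I.1 (fun y => φ y α) x,
    fun J α => pdI J.1 (fun y => φ y α) x)

/-- Coordinate direction `∂/∂xʲ` in `J2`. -/
def eX {m n : ℕ} (j : Fin m) : J2 m n := (Pi.single j 1, 0, 0, 0)
/-- Coordinate direction `∂/∂uᵅ` in `J2`. -/
def eU {m n : ℕ} (α : Fin n) : J2 m n := (0, Pi.single α 1, 0, 0)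
/-- Coordinate direction `∂/∂uᵅᵢ` in `J2`. -/
def eU1 {m n : ℕ} (i : Fin m) (α : Fin n) : J2 m n :=
  (0, 0, Pi.single i (Pi.single α 1), 0)
/-- Coordinate direction `∂/∂uᵅ_I` in `J2`. -/
def eU2 {m n : ℕ} (I : Idx m 2) (α : Fin n) : J2 m n :=
  (0, 0, 0, Pi.single I (Pi.single α 1))

/-- Partial derivative `∂G/∂xʲ` of a function of the second-order jet coordinates. -/
def dX {m n : ℕ} (j : Fin m) (G : J2 m n → ℝ) : J2 m n → ℝ :=
  fun a => fderiv ℝ G a (eX j)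
/-- Partial derivative `∂G/∂uᵅ`. -/
def dU {m n : ℕ} (α : Fin n) (G : J2 m n → ℝ) : J2 m n → ℝ :=
  fun a => fderiv ℝ G a (eU α)
/-- Partial derivative `∂G/∂uᵅᵢ`. -/
def dU1 {m n : ℕ} (i : Fin m) (α : Fin n) (G : J2 m n → ℝ) : J2 m n → ℝ :=
  fun a => fderiv ℝ G a (eU1 i α)
/-- Partial derivative `∂G/∂uᵅ_I`, `|I| = 2`. -/
def dU2 {m n : ℕ} (I : Idx m 2) (α : Fin n) (G : J2 m n → ℝ) : J2 m n → ℝ :=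
  fun a => fderiv ℝ G a (eU2 I α)

/-- Coordinate total derivative `D_j G`, a function of the third-order jet coordinates. -/
def totalD {m n : ℕ} (j : Fin m) (G : J2 m n → ℝ) : J3 m n → ℝ := fun w =>
  dX j G (π32 w) + (∑ α, w.2.2.1 j α * dU α G (π32 w))
    + (∑ α, ∑ i, w.2.2.2.1 (idx2 i j) α * dU1 i α G (π32 w))
    + (∑ α, ∑ I : Idx m 2, w.2.2.2.2 (Idx.succ I j) α * dU2 I α G (π32 w))

/-- The first-order momentum components `pⁱᵅ` of the restricted Legendre map. -/
def FLp1 {m n : ℕ} (L : J2 m n → ℝ) (i : Fin m) (α : Fin n) : J3 m n → ℝ := fun w =>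
  dU1 i α L (π32 w) - ∑ j, (nij i j)⁻¹ * totalD j (dU2 (idx2 i j) α L) w

/-- Euler–Lagrange expression of a second-order Lagrangian `L` at `φ`. -/
def EL {m n : ℕ} (L : J2 m n → ℝ) (φ : (Fin m → ℝ) → Fin n → ℝ) (α : Fin n) :
    (Fin m → ℝ) → ℝ := fun x =>
  dU α L (jet2 φ x)
    - (∑ i, pd i (fun y => dU1 i α L (jet2 φ y)) x)
    + ∑ I : Idx m 2, pdI I.1 (fun y => dU2 I α L (jet2 φ y)) x

/-! Since `p^I_α = (∂L/∂u^α_I) ∘ j²φ`, the chain rule gives `∂_j p^I_α = (D_j ∂L/∂u^α_I) ∘ j³φ`: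
the derivative of `j²φ` along `x^j` is `(1_j, u^α_j, u^α_{1_i+1_j}, u^α_{I+1_j})` evaluated on
`j³φ`, where the identification of `∂_j ∂^I φ` with `∂^{I+1_j} φ` uses the symmetry of mixed partial
derivatives. Substituting this into the second field equation leaves a linear equation for `p^i_α`
whose solution is the first momentum of `FL` along `j³φ`. -/

open scoped ContDiff

lemma contDiff_fderiv_apply_const {𝕜 E F : Type*} [NontriviallyNormedField 𝕜]
    [NormedAddCommGroup E] [NormedSpace 𝕜 E] [NormedAddCommGroup F] [NormedSpace 𝕜 F]
    {f : E → F} (hf : ContDiff 𝕜 ∞ f) (v : E) : ContDiff 𝕜 ∞ (fun x => fderiv 𝕜 f x v) :=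
  (hf.fderiv_right (by simp)).clm_apply contDiff_const

section PartialDerivatives

variable {m : ℕ}

lemma contDiff_pd {f : (Fin m → ℝ) → ℝ} (hf : ContDiff ℝ ∞ f) (i : Fin m) :
    ContDiff ℝ ∞ (pd i f) :=
  contDiff_fderiv_apply_const hf _

lemma pd_comm {f : (Fin m → ℝ) → ℝ} (hf : ContDiff ℝ ∞ f) (i j : Fin m) :
    pd i (pd j f) = pd j (pd i f) := by
  have hf' : Differentiable ℝ (fderiv ℝ f) :=
    (hf.fderiv_right (m := ∞) (by simp)).differentiable (by simp)
  have hpd : ∀ v w x, fderiv ℝ (fun y => fderiv ℝ f y v) x w = fderiv ℝ (fderiv ℝ f) x w v :=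
    fun v w x => by simp [fderiv_clm_apply (hf' x) (differentiableAt_const v)]
  funext x
  change fderiv ℝ (fun y => fderiv ℝ f y _) x _ = fderiv ℝ (fun y => fderiv ℝ f y _) x _
  rw [hpd, hpd]
  exact hf.contDiffAt.isSymmSndFDerivAt (by simp; exact WithTop.coe_le_coe.2 le_top) _ _

lemma contDiff_iterate_pd {f : (Fin m → ℝ) → ℝ} (hf : ContDiff ℝ ∞ f) (i : Fin m) (k : ℕ) :
    ContDiff ℝ ∞ ((pd i)^[k] f) := by
  induction k with
  | zero => exact hf
  | succ k ih => rw [Function.iterate_succ_apply']; exact contDiff_pd ih i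

lemma pd_iterate_pd_comm {f : (Fin m → ℝ) → ℝ} (hf : ContDiff ℝ ∞ f) (i j : Fin m) (k : ℕ) :
    pd j ((pd i)^[k] f) = (pd i)^[k] (pd j f) := by
  induction k with
  | zero => rfl
  | succ k ih =>
    rw [Function.iterate_succ_apply', Function.iterate_succ_apply',
      pd_comm (contDiff_iterate_pd hf i k) j i, ih]

end PartialDerivatives

section MultiIndexDerivatives

variable {m : ℕ}

lemma contDiff_foldr_iterate_pd (I : Fin m → ℕ) {f : (Fin m → ℝ) → ℝ} (hf : ContDiff ℝ ∞ f)
    (l : List (Fin m)) : ContDiff ℝ ∞ (l.foldr (fun i g => (pd i)^[I i] g) f) := by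
  induction l with
  | nil => exact hf
  | cons i l ih => exact contDiff_iterate_pd ih i (I i)

lemma contDiff_pdI (I : Fin m → ℕ) {f : (Fin m → ℝ) → ℝ} (hf : ContDiff ℝ ∞ f) :
    ContDiff ℝ ∞ (pdI I f) :=
  contDiff_foldr_iterate_pd I hf _

lemma pd_foldr_iterate_pd (I : Fin m → ℕ) {f : (Fin m → ℝ) → ℝ} (hf : ContDiff ℝ ∞ f)
    {j : Fin m} {l : List (Fin m)} (hl : l.Nodup) (hj : j ∈ l) :
    pd j (l.foldr (fun i g => (pd i)^[I i] g) f)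
      = l.foldr (fun i g => (pd i)^[(I + Pi.single j 1 : Fin m → ℕ) i] g) f := by
  induction l with
  | nil => simp at hj
  | cons i l ih =>
    obtain ⟨hil, hl⟩ := List.nodup_cons.1 hl
    simp only [List.foldr_cons]
    rw [pd_iterate_pd_comm (contDiff_foldr_iterate_pd I hf l)]
    rcases eq_or_ne j i with rfl | hji
    · have hrest : l.foldr (fun i g => (pd i)^[(I + Pi.single j 1 : Fin m → ℕ) i] g) f
          = l.foldr (fun i g => (pd i)^[I i] g) f :=
        List.foldr_ext _ _ _ fun a ha _ => by
          rw [Pi.add_apply, Pi.single_eq_of_ne (ne_of_mem_of_not_mem ha hil), add_zero]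
      rw [hrest, Pi.add_apply, Pi.single_eq_same, Function.iterate_add_apply,
        Function.iterate_one]
    · rw [ih hl ((List.mem_cons.1 hj).resolve_left hji), Pi.add_apply,
        Pi.single_eq_of_ne hji.symm, add_zero]

lemma pd_pdI (I : Fin m → ℕ) (j : Fin m) {f : (Fin m → ℝ) → ℝ} (hf : ContDiff ℝ ∞ f) :
    pd j (pdI I f) = pdI (I + Pi.single j 1) f :=
  pd_foldr_iterate_pd I hf (List.nodup_finRange m) (List.mem_finRange j)

lemma pdI_zero (f : (Fin m → ℝ) → ℝ) : pdI 0 f = f :=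
  List.foldr_ext _ (fun _ g => g) f (fun _ _ _ => rfl) |>.trans (by simp)

lemma pdI_single {f : (Fin m → ℝ) → ℝ} (hf : ContDiff ℝ ∞ f) (i : Fin m) :
    pdI (Pi.single i 1) f = pd i f := by
  simpa [pdI_zero] using (pd_pdI 0 i hf).symm

end MultiIndexDerivatives

section JetCoordinates

variable {m n : ℕ}

lemma J2_eq_sum (v : J2 m n) :
    v = (∑ j, v.1 j • eX j) + (∑ α, v.2.1 α • eU α)
      + (∑ i, ∑ α, v.2.2.1 i α • eU1 i α) + (∑ I, ∑ α, v.2.2.2 I α • eU2 I α) := by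
  refine Prod.ext ?_ (Prod.ext ?_ (Prod.ext ?_ ?_)) <;> ext <;>
    simp [eX, eU, eU1, eU2, Prod.fst_sum, Prod.snd_sum, Finset.sum_apply, Pi.single_apply,
      apply_ite]

lemma fderiv_J2_apply (G : J2 m n → ℝ) (a v : J2 m n) :
    fderiv ℝ G a v = (∑ j, v.1 j * dX j G a) + (∑ α, v.2.1 α * dU α G a)
      + (∑ i, ∑ α, v.2.2.1 i α * dU1 i α G a) + (∑ I, ∑ α, v.2.2.2 I α * dU2 I α G a) := by
  conv_lhs => rw [J2_eq_sum v]
  simp [dX, dU, dU1, dU2]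

end JetCoordinates

section Prolongation

variable {m n : ℕ} {φ : (Fin m → ℝ) → Fin n → ℝ}

lemma differentiable_jet2 (hφ : ContDiff ℝ ∞ φ) : Differentiable ℝ (jet2 φ) := by
  have hd (f : (Fin m → ℝ) → ℝ) (hf : ContDiff ℝ ∞ f) : Differentiable ℝ f :=
    hf.differentiable (by simp)
  have hφα (α : Fin n) : ContDiff ℝ ∞ (fun y => φ y α) := contDiff_pi.1 hφ α
  refine differentiable_id.prodMk <| (hφ.differentiable (by simp)).prodMk <| .prodMk ?_ ?_
  · exact differentiable_pi'' fun i => differentiable_pi'' fun α =>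
      hd _ (contDiff_pd (hφα α) i)
  · exact differentiable_pi'' fun (I : Idx m 2) => differentiable_pi'' fun α =>
      hd _ (contDiff_pdI I.1 (hφα α))

lemma fderiv_jet2_apply_single (hφ : ContDiff ℝ ∞ φ) (x : Fin m → ℝ) (j : Fin m) :
    fderiv ℝ (jet2 φ) x (Pi.single j 1) =
      (Pi.single j 1, fun α => pd j (fun y => φ y α) x,
        fun i α => pd j (pd i (fun y => φ y α)) x,
        fun I α => pd j (pdI I.1 (fun y => φ y α)) x) := by
  have hjet := differentiable_jet2 hφ x
  have hφd : DifferentiableAt ℝ φ x := hjet.snd.fst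
  have hpi1 : DifferentiableAt ℝ (fun y i α => pd i (fun y => φ y α) y) x := hjet.snd.snd.fst
  have hpi2 : DifferentiableAt ℝ (fun y (I : Idx m 2) α => pdI I.1 (fun y => φ y α) y) x :=
    hjet.snd.snd.snd
  have h1 (i : Fin m) (α : Fin n) : DifferentiableAt ℝ (pd i (fun y => φ y α)) x :=
    differentiableAt_pi.1 (differentiableAt_pi.1 hpi1 i) α
  have h2 (I : Idx m 2) (α : Fin n) : DifferentiableAt ℝ (pdI I.1 (fun y => φ y α)) x :=
    differentiableAt_pi.1 (differentiableAt_pi.1 hpi2 I) α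
  unfold jet2
  rw [DifferentiableAt.fderiv_prodMk differentiableAt_fun_id (hφd.prodMk (hpi1.prodMk hpi2)),
    DifferentiableAt.fderiv_prodMk hφd (hpi1.prodMk hpi2),
    DifferentiableAt.fderiv_prodMk hpi1 hpi2]
  simp only [fderiv_fun_id, fderiv_pi, differentiableAt_pi, h1, h2, implies_true,
    ContinuousLinearMap.prod_apply, ContinuousLinearMap.id_apply, ContinuousLinearMap.coe_pi',
    Prod.mk.injEq, true_and]
  refine ⟨?_, rfl, rfl⟩
  ext α
  simp [pd, fderiv_apply hφd α]

lemma pd_comp_jet2 {G : J2 m n → ℝ} (hG : Differentiable ℝ G) (hφ : ContDiff ℝ ∞ φ)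
    (j : Fin m) (x : Fin m → ℝ) :
    pd j (fun y => G (jet2 φ y)) x = totalD j G (jet3 φ x) := by
  have hφα (α : Fin n) : ContDiff ℝ ∞ (fun y => φ y α) := contDiff_pi.1 hφ α
  have hchain : pd j (fun y => G (jet2 φ y)) x
      = fderiv ℝ G (jet2 φ x) (fderiv ℝ (jet2 φ) x (Pi.single j 1)) := by
    change fderiv ℝ (G ∘ jet2 φ) x _ = _
    rw [fderiv_comp x (hG _) (differentiable_jet2 hφ x)]
    rfl
  have hidx2 (i : Fin m) (α : Fin n) :
      pd j (pd i (fun y => φ y α)) x = pdI (idx2 i j).1 (fun y => φ y α) x := by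
    rw [← pdI_single (hφα α), pd_pdI _ _ (hφα α)]
    rfl
  have hsucc (I : Idx m 2) (α : Fin n) :
      pd j (pdI I.1 (fun y => φ y α)) x = pdI (I.succ j).1 (fun y => φ y α) x := by
    rw [pd_pdI _ _ (hφα α)]
    rfl
  rw [hchain, fderiv_jet2_apply_single hφ, fderiv_J2_apply]
  simp only [totalD, π32, jet3, jet2, hidx2, hsucc, Pi.single_apply, ite_mul, one_mul, zero_mul,
    Finset.sum_ite_eq', Finset.mem_univ, if_true]
  rw [Finset.sum_comm (γ := Fin m), Finset.sum_comm (γ := Idx m 2)]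

end Prolongation

theorem statement3_general (m n : ℕ) (L : J2 m n → ℝ) (hL : ContDiff ℝ (⊤ : ℕ∞) L)
    (φ : (Fin m → ℝ) → Fin n → ℝ) (hφ : ContDiff ℝ (⊤ : ℕ∞) φ)
    (p1 : Fin m → Fin n → (Fin m → ℝ) → ℝ)
    (p2 : Idx m 2 → Fin n → (Fin m → ℝ) → ℝ)
    (hmom : ∀ (I : Idx m 2) (α : Fin n) (x : Fin m → ℝ),
      p2 I α x = dU2 I α L (jet2 φ x))
    (hrel : ∀ (i : Fin m) (α : Fin n) (x : Fin m → ℝ),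
      (∑ j, (nij i j)⁻¹ * pd j (p2 (idx2 i j) α) x) + p1 i α x
        - dU1 i α L (jet2 φ x) = 0) :
    ∀ (i : Fin m) (α : Fin n) (x : Fin m → ℝ),
      p1 i α x = FLp1 L i α (jet3 φ x) := by
  intro i α x
  have hp2 (j : Fin m) :
      pd j (p2 (idx2 i j) α) x = totalD j (dU2 (idx2 i j) α L) (jet3 φ x) := by
    rw [show p2 (idx2 i j) α = fun y => dU2 (idx2 i j) α L (jet2 φ y) from funext (hmom _ _)]
    exact pd_comp_jet2 ((contDiff_fderiv_apply_const hL _).differentiable (by simp)) hφ j x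
  have h := hrel i α x
  simp only [hp2] at h
  rw [FLp1, show π32 (jet3 φ x) = jet2 φ x from rfl]
  linarith

/-- the momenta satisfying the unified field equations along `j³φ` are
uniquely determined: they coincide with the components of the restricted Legendre map. -/
theorem statement3 (m n : ℕ) (L : J2 m n → ℝ) (hL : ContDiff ℝ (⊤ : ℕ∞) L)
    (φ : (Fin m → ℝ) → Fin n → ℝ) (hφ : ContDiff ℝ (⊤ : ℕ∞) φ)
    (p1 : Fin m → Fin n → (Fin m → ℝ) → ℝ)
    (p2 : Idx m 2 → Fin n → (Fin m → ℝ) → ℝ)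
    (hp1 : ∀ i α, ContDiff ℝ (⊤ : ℕ∞) (p1 i α))
    (hp2 : ∀ I α, ContDiff ℝ (⊤ : ℕ∞) (p2 I α))
    (hmom : ∀ (I : Idx m 2) (α : Fin n) (x : Fin m → ℝ),
      p2 I α x = dU2 I α L (jet2 φ x))
    (hrel : ∀ (i : Fin m) (α : Fin n) (x : Fin m → ℝ),
      (∑ j, (nij i j)⁻¹ * pd j (p2 (idx2 i j) α) x) + p1 i α x
        - dU1 i α L (jet2 φ x) = 0) :
    ∀ (i : Fin m) (α : Fin n) (x : Fin m → ℝ),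
      p1 i α x = FLp1 L i α (jet3 φ x) :=
  statement3_general m n L hL φ hφ p1 p2 hmom hrel
end
end

section
/- Let L be a second-order Lagrangian, FL its restricted Legendre map, and define the extended Legendre map F̃L on the third-order jet coordinate space by adjoining to the components of FL the additional component p := L − Σ_{α,i} u^α_i p^i_α − Σ_{α,|I|=2} u^α_I ∂L/∂u^α_I, where p^i_α denote the momentum components of FL. Then at every point a of the third-order jet coordinate space the ranks of the total (Fréchet) derivatives coincide: rank D(F̃L)(a) = rank D(FL)(a). -/
open scoped BigOperators

noncomputable section

/-- Restricted 2-symmetric multimomentum coordinates `(xⁱ, uᵅ, uᵅᵢ, pⁱᵅ, p^Iᵅ)`. -/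
abbrev Mom (m n : ℕ) : Type :=
  (Fin m → ℝ) × (Fin n → ℝ) × (Fin m → Fin n → ℝ) × (Fin m → Fin n → ℝ) ×
    (Idx m 2 → Fin n → ℝ)

/-- The restricted Legendre map `FL : J³π → J²π^‡`. -/
def FLmap {m n : ℕ} (L : J2 m n → ℝ) : J3 m n → Mom m n := fun w =>
  (w.1, w.2.1, w.2.2.1, fun i α => FLp1 L i α w, fun I α => dU2 I α L (π32 w))

/-- The extended Legendre map `F̃L : J³π → J²π^†`, adjoining the component
`p = L − Σ uᵅᵢ pⁱᵅ − Σ uᵅ_I ∂L/∂uᵅ_I`. -/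
def FLext {m n : ℕ} (L : J2 m n → ℝ) : J3 m n → Mom m n × ℝ := fun w =>
  (FLmap L w,
    L (π32 w) - (∑ α, ∑ i, w.2.2.1 i α * FLp1 L i α w)
      - ∑ α, ∑ I : Idx m 2, w.2.2.2.1 I α * dU2 I α L (π32 w))

/-!
The extra component `p` of `F̃L` has a derivative that vanishes on the kernel of `D(FL)(a)`.
On that kernel the `x`, `u`, `uᵢ` directions and the derivatives of all momenta vanish, so
by the product rule only `∂L/∂u_I · du_I − p^I · du_I` survives, which is zero because
`p^I = ∂L/∂u_I`. Hence both derivatives have the same kernel, and rank–nullity concludes.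
-/

open scoped ContDiff

universe w

section LinearAlgebra

variable {K V : Type*} {W W' : Type w} [DivisionRing K] [AddCommGroup V] [Module K V]
  [AddCommGroup W] [Module K W] [AddCommGroup W'] [Module K W'] [FiniteDimensional K V]

theorem LinearMap.rank_prod_eq_of_ker_le {f : V →ₗ[K] W} {g : V →ₗ[K] W'}
    (h : LinearMap.ker f ≤ LinearMap.ker g) : (f.prod g).rank = f.rank := by
  have hker : LinearMap.ker (f.prod g) = LinearMap.ker f := by
    rw [LinearMap.ker_prod, inf_eq_left.2 h]
  have hfg := (f.prod g).finrank_range_add_finrank_ker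
  have hf := f.finrank_range_add_finrank_ker
  rw [hker] at hfg
  unfold LinearMap.rank
  rw [← Module.finrank_eq_rank, ← Module.finrank_eq_rank]
  congr 1
  omega

end LinearAlgebra

section Calculus

variable {𝕜 E : Type*} {F G : Type w} [NontriviallyNormedField 𝕜] [NormedAddCommGroup E]
  [NormedSpace 𝕜 E] [NormedAddCommGroup F] [NormedSpace 𝕜 F] [NormedAddCommGroup G]
  [NormedSpace 𝕜 G]

theorem rank_fderiv_prodMk_eq [FiniteDimensional 𝕜 E] {f : E → F} {g : E → G} {a : E}
    (hf : DifferentiableAt 𝕜 f a) (hg : DifferentiableAt 𝕜 g a)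
    (h : ∀ v, fderiv 𝕜 f a v = 0 → fderiv 𝕜 g a v = 0) :
    (fderiv 𝕜 (fun x => (f x, g x)) a).toLinearMap.rank = (fderiv 𝕜 f a).toLinearMap.rank := by
  rw [hf.fderiv_prodMk hg, ContinuousLinearMap.coe_prod]
  exact LinearMap.rank_prod_eq_of_ker_le h

theorem ContDiff.fderiv_apply_const {f : E → F} (hf : ContDiff 𝕜 ∞ f) (v : E) :
    ContDiff 𝕜 ∞ (fun x => fderiv 𝕜 f x v) :=
  (hf.fderiv_right (by simp)).clm_apply contDiff_const

end Calculus

section Jets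

variable {m n : ℕ}

def π32L (m n : ℕ) : J3 m n →L[ℝ] J2 m n :=
  LinearMap.toContinuousLinearMap
    { toFun := π32, map_add' := fun _ _ => rfl, map_smul' := fun _ _ => rfl }

@[simp]
theorem π32L_apply (w : J3 m n) : π32L m n w = π32 w := rfl

@[fun_prop]
theorem contDiff_π32 {k : WithTop ℕ∞} : ContDiff ℝ k (π32 : J3 m n → J2 m n) :=
  (π32L m n).contDiff

theorem contDiff_totalD {g : J2 m n → ℝ} (hg : ContDiff ℝ ∞ g) (j : Fin m) :
    ContDiff ℝ ∞ (totalD j g) := by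
  have hX := hg.fderiv_apply_const (eX j)
  have hU := fun α => hg.fderiv_apply_const (eU (m := m) α)
  have hU1 := fun i α => hg.fderiv_apply_const (eU1 (n := n) i α)
  have hU2 := fun I α => hg.fderiv_apply_const (eU2 (n := n) I α)
  unfold totalD dX dU dU1 dU2
  fun_prop

end Jets

section Legendre

variable {m n : ℕ} {L : J2 m n → ℝ}

/-- `FLext L w = (FLmap L w, FLp L w)` holds definitionally. -/
def FLp (L : J2 m n → ℝ) : J3 m n → ℝ := fun w =>
  L (π32 w) - (∑ α, ∑ i, w.2.2.1 i α * FLp1 L i α w)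
    - ∑ α, ∑ I : Idx m 2, w.2.2.2.1 I α * dU2 I α L (π32 w)

theorem contDiff_dU2_comp_π32 (hL : ContDiff ℝ ∞ L) (I : Idx m 2) (α : Fin n) :
    ContDiff ℝ ∞ (fun w : J3 m n => dU2 I α L (π32 w)) :=
  (hL.fderiv_apply_const _).comp contDiff_π32

theorem contDiff_FLp1 (hL : ContDiff ℝ ∞ L) (i : Fin m) (α : Fin n) :
    ContDiff ℝ ∞ (FLp1 L i α) := by
  have h1 := hL.fderiv_apply_const (eU1 i α)
  have h2 := fun j => contDiff_totalD (hL.fderiv_apply_const (eU2 (idx2 i j) α)) j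
  unfold FLp1 dU1 dU2
  fun_prop

theorem contDiff_FLmap (hL : ContDiff ℝ ∞ L) : ContDiff ℝ ∞ (FLmap L) := by
  have h1 := contDiff_FLp1 hL
  have h2 := contDiff_dU2_comp_π32 hL
  unfold FLmap
  fun_prop

theorem contDiff_FLp (hL : ContDiff ℝ ∞ L) : ContDiff ℝ ∞ (FLp L) := by
  have h1 := contDiff_FLp1 hL
  have h2 := contDiff_dU2_comp_π32 hL
  unfold FLp
  fun_prop

theorem fderiv_FLmap_apply (hL : ContDiff ℝ ∞ L) (a v : J3 m n) :
    fderiv ℝ (FLmap L) a v = (v.1, v.2.1, v.2.2.1, fun i α => fderiv ℝ (FLp1 L i α) a v,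
      fun I α => fderiv ℝ (fun w => dU2 I α L (π32 w)) a v) := by
  have h1 := fun i α => (contDiff_FLp1 hL i α).differentiable (by simp) a
  have h2 := fun I α => (contDiff_dU2_comp_π32 hL I α).differentiable (by simp) a
  have hid := hasFDerivAt_id (𝕜 := ℝ) a
  have h : HasFDerivAt (FLmap L) _ a :=
    hid.fst.prodMk (hid.snd.fst.prodMk (hid.snd.snd.fst.prodMk
      ((hasFDerivAt_pi.2 fun i => hasFDerivAt_pi.2 fun α => (h1 i α).hasFDerivAt).prodMk
        (hasFDerivAt_pi.2 fun I => hasFDerivAt_pi.2 fun α => (h2 I α).hasFDerivAt))))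
  rw [h.fderiv]
  rfl

theorem fderiv_FLp_apply (hL : ContDiff ℝ ∞ L) (a v : J3 m n) :
    fderiv ℝ (FLp L) a v = fderiv ℝ L (π32 a) (π32 v)
      - (∑ α, ∑ i, (a.2.2.1 i α * fderiv ℝ (FLp1 L i α) a v + FLp1 L i α a * v.2.2.1 i α))
      - ∑ α, ∑ I : Idx m 2, (a.2.2.2.1 I α * fderiv ℝ (fun w => dU2 I α L (π32 w)) a v
          + dU2 I α L (π32 a) * v.2.2.2.1 I α) := by
  have hid := hasFDerivAt_id (𝕜 := ℝ) a
  have hu1 := fun i α => hasFDerivAt_pi'.1 (hasFDerivAt_pi'.1 hid.snd.snd.fst i) α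
  have hu2 := fun I α => hasFDerivAt_pi'.1 (hasFDerivAt_pi'.1 hid.snd.snd.snd.fst I) α
  have hp1 := fun i α => ((contDiff_FLp1 hL i α).differentiable (by simp) a).hasFDerivAt
  have hp2 := fun I α => ((contDiff_dU2_comp_π32 hL I α).differentiable (by simp) a).hasFDerivAt
  have hL' := ((hL.differentiable (by simp) (π32 a)).hasFDerivAt).comp a (π32L m n).hasFDerivAt
  have h : HasFDerivAt (FLp L) _ a :=
    (hL'.sub (HasFDerivAt.fun_sum fun α _ => HasFDerivAt.fun_sum fun i _ =>
      (hu1 i α).fun_mul (hp1 i α))).sub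
      (HasFDerivAt.fun_sum fun α _ => HasFDerivAt.fun_sum fun I _ => (hu2 I α).fun_mul (hp2 I α))
  rw [h.fderiv]
  simp

theorem fderiv_apply_eq_sum_dU2 (G : J2 m n → ℝ) (z : J2 m n) (w : Idx m 2 → Fin n → ℝ) :
    fderiv ℝ G z (0, 0, 0, w) = ∑ α, ∑ I : Idx m 2, w I α * dU2 I α G z := by
  have hw : ((0, 0, 0, w) : J2 m n) = ∑ α, ∑ I : Idx m 2, w I α • eU2 I α := by
    ext <;> simp [eU2, Prod.fst_sum, Prod.snd_sum, Finset.sum_apply, Pi.single_apply]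
  simp [hw, dU2]

theorem fderiv_FLp_eq_zero_of_fderiv_FLmap_eq_zero (hL : ContDiff ℝ ∞ L) {a v : J3 m n}
    (hv : fderiv ℝ (FLmap L) a v = 0) : fderiv ℝ (FLp L) a v = 0 := by
  rw [fderiv_FLmap_apply hL] at hv
  simp only [Prod.mk_eq_zero] at hv
  obtain ⟨hx, hu, hu1, hp1, hp2⟩ := hv
  have hπ : π32 v = (0, 0, 0, v.2.2.2.1) := by simp [π32, hx, hu, hu1]
  rw [fderiv_FLp_apply hL, hπ, fderiv_apply_eq_sum_dU2]
  simp [hu1, congrFun₂ hp1, congrFun₂ hp2, mul_comm]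

end Legendre

/-- at every point the ranks of the Fréchet derivatives of the extended and
restricted Legendre maps coincide. -/
theorem statement4 (m n : ℕ) (L : J2 m n → ℝ) (hL : ContDiff ℝ (⊤ : ℕ∞) L)
    (a : J3 m n) :
    LinearMap.rank ((fderiv ℝ (FLext L) a).toLinearMap)
      = LinearMap.rank ((fderiv ℝ (FLmap L) a).toLinearMap) :=
  rank_fderiv_prodMk_eq ((contDiff_FLmap hL).differentiable (by simp) a)
    ((contDiff_FLp hL).differentiable (by simp) a)
    fun _ => fderiv_FLp_eq_zero_of_fderiv_FLmap_eq_zero hL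
end
end

section
/- Let m, n ≥ 1 and let V := ℝ^m × ℝ^n × (ℝ^n)^m × ℝ × (ℝ^n)^m × (ℝ^n)^{s₂} be the real vector space with standard basis vectors e_{x^i}, e_{u^α}, e_{u^α_i}, e_p, e_{p^i_α}, e_{p^I_α} (|I| = 2) and corresponding dual basis covectors dx^i, du^α, du^α_i, dp, dp^i_α, dp^I_α. Set d^m x := dx^1 ∧ ⋯ ∧ dx^m and d^{m−1}x_i := ι_{e_{x^i}} d^m x, and define the alternating (m+1)-form on V: Ω := −dp ∧ d^m x − Σ_{α,i} dp^i_α ∧ du^α ∧ d^{m−1}x_i − Σ_{α,i,j} (1/n(ij)) dp^{1_i+1_j}_α ∧ du^α_i ∧ d^{m−1}x_j. Then Ω is 1-nondegenerate: for v ∈ V, if the interior product ι_v Ω is the zero alternating m-form, then v = 0. (This is the pointwise statement that the symmetrized Liouville (m+1)-form on the extended 2-symmetric multimomentum bundle is multisymplectic.) -/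
open scoped BigOperators

set_option synthInstance.maxHeartbeats 1000000
set_option maxHeartbeats 1000000

noncomputable section

/-- The model vector space `V = ℝ^m × ℝ^n × (ℝ^n)^m × ℝ × (ℝ^n)^m × (ℝ^n)^{s₂}`, with
coordinates `(xⁱ, uᵅ, uᵅᵢ, p, pⁱᵅ, p^Iᵅ)`. -/
abbrev Vph (m n : ℕ) : Type :=
  (Fin m → ℝ) × (Fin n → ℝ) × (Fin m → Fin n → ℝ) × ℝ × (Fin m → Fin n → ℝ) ×
    (Idx m 2 → Fin n → ℝ)

/-- The dual space of `V`, whose exterior algebra hosts the forms. -/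
abbrev Dph (m n : ℕ) : Type := Module.Dual ℝ (Vph m n)

/-- The exterior algebra of the dual of `V`: alternating forms on `V`. -/
abbrev Eph (m n : ℕ) : Type := ExteriorAlgebra ℝ (Dph m n)

/-- The covector `dxⁱ`. -/
def dxF {m n : ℕ} (i : Fin m) : Dph m n :=
  ⟨⟨fun v => v.1 i, fun _ _ => rfl⟩, fun _ _ => rfl⟩
/-- The covector `duᵅ`. -/
def duF {m n : ℕ} (α : Fin n) : Dph m n :=
  ⟨⟨fun v => v.2.1 α, fun _ _ => rfl⟩, fun _ _ => rfl⟩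
/-- The covector `duᵅᵢ`. -/
def du1F {m n : ℕ} (i : Fin m) (α : Fin n) : Dph m n :=
  ⟨⟨fun v => v.2.2.1 i α, fun _ _ => rfl⟩, fun _ _ => rfl⟩
/-- The covector `dp`. -/
def dpF {m n : ℕ} : Dph m n :=
  ⟨⟨fun v => v.2.2.2.1, fun _ _ => rfl⟩, fun _ _ => rfl⟩
/-- The covector `dpⁱᵅ`. -/
def dp1F {m n : ℕ} (i : Fin m) (α : Fin n) : Dph m n :=
  ⟨⟨fun v => v.2.2.2.2.1 i α, fun _ _ => rfl⟩, fun _ _ => rfl⟩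
/-- The covector `dp^Iᵅ`. -/
def dp2F {m n : ℕ} (I : Idx m 2) (α : Fin n) : Dph m n :=
  ⟨⟨fun v => v.2.2.2.2.2 I α, fun _ _ => rfl⟩, fun _ _ => rfl⟩

/-- The basis vector `e_{xⁱ}` of `V`. -/
def basX {m n : ℕ} (i : Fin m) : Vph m n := (Pi.single i 1, 0, 0, 0, 0, 0)

/-- Inclusion of covectors into the exterior algebra. -/
def iotaD {m n : ℕ} (d : Dph m n) : Eph m n := ExteriorAlgebra.ι ℝ d

/-- Interior product (contraction) by the vector `v ∈ V` on forms. -/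
def ctr {m n : ℕ} (v : Vph m n) : Eph m n →ₗ[ℝ] Eph m n :=
  CliffordAlgebra.contractLeft (Module.Dual.eval ℝ (Vph m n) v)

/-- The volume form `d^m x = dx¹ ∧ ⋯ ∧ dxᵐ`. -/
def dmx (m n : ℕ) : Eph m n := (List.ofFn fun i : Fin m => iotaD (dxF i)).prod

/-- `d^{m−1}x_i = ι_{e_{xⁱ}} d^m x`. -/
def dm1x {m n : ℕ} (i : Fin m) : Eph m n := ctr (basX i) (dmx m n)

/-- The symmetrized Liouville `(m+1)`-form
`Ω = −dp ∧ d^m x − Σ dpⁱᵅ ∧ duᵅ ∧ d^{m−1}xᵢ − Σ (1/n(ij)) dp^{1ᵢ+1ⱼ}ᵅ ∧ duᵅᵢ ∧ d^{m−1}xⱼ`. -/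
def OmegaF (m n : ℕ) : Eph m n :=
  - (iotaD (dpF (m := m) (n := n)) * dmx m n)
    - (∑ α : Fin n, ∑ i : Fin m, iotaD (dp1F i α) * iotaD (duF α) * dm1x i)
    - ∑ α : Fin n, ∑ i : Fin m, ∑ j : Fin m,
        (nij i j)⁻¹ • (iotaD (dp2F (idx2 i j) α) * iotaD (du1F i α) * dm1x j)

/-!
Contracting `Ω` with `e_p` gives `-d^m x`, so `ι_v Ω = 0` forces `ι_v d^m x = 0`, i.e. `v` has no
`x`-component. For such `v`, `ι_v Ω = -(p(v) d^m x + Σ_j θ_j ∧ d^{m-1}x_j)` with covectors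
`θ_j = contractOmegaCoeff v j` vanishing on the `e_{x^k}`. Since `dx^i ∧ d^{m-1}x_j = δ_ij d^m x`,
the `d^{m-1}x_j` are linearly independent, so contracting with vectors without `x`-component kills
every `θ_j`; evaluating `θ_j` on the remaining basis vectors yields the other components of `v`.
-/
theorem CliffordAlgebra.contractLeft_prod_map_ι_eq_zero {R M : Type*} [CommRing R]
    [AddCommGroup M] [Module R M] {Q : QuadraticForm R M} (d : Module.Dual R M) :
    ∀ l : List M, (∀ x ∈ l, d x = 0) → contractLeft d (l.map (ι Q)).prod = 0
  | [], _ => contractLeft_one Q d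
  | x :: l, h => by
    rw [List.map_cons, List.prod_cons, contractLeft_ι_mul, h x List.mem_cons_self, zero_smul,
      contractLeft_prod_map_ι_eq_zero d l (fun y hy => h y (List.mem_cons_of_mem x hy)),
      mul_zero, sub_zero]

theorem ExteriorAlgebra.ιMulti_ne_zero_of_dual {R M : Type*} [CommRing R] [Nontrivial R]
    [AddCommGroup M] [Module R M] {k : ℕ} (v : Fin k → M) (f : Fin k → Module.Dual R M)
    (hdiag : ∀ i, f i (v i) = 1) (hoff : ∀ ⦃i j⦄, i ≠ j → f i (v j) = 0) :
    ιMulti R k v ≠ 0 := by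
  intro h
  have hpair := exteriorPower.pairingDual_apply_apply_eq_one v f hdiag hoff k
    (OrderIso.refl (Fin k)).toOrderEmbedding
  have hv : exteriorPower.ιMulti R k (v ∘ (OrderIso.refl (Fin k)).toOrderEmbedding) = 0 :=
    Subtype.ext h
  rw [hv, map_zero] at hpair
  exact zero_ne_one hpair

section
variable {m n : ℕ}

lemma idx2_eq_idx2_self_iff (i j : Fin m) : idx2 i j = idx2 j j ↔ i = j := by
  refine ⟨fun h => by_contra fun hij => ?_, fun h => h ▸ rfl⟩
  have hi := congrFun (congrArg Subtype.val h) i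
  simp [idx2, hij] at hi

lemma exists_idx2_eq (I : Idx m 2) : ∃ i j, idx2 i j = I := by
  obtain ⟨f, hf⟩ := I
  set s := Finsupp.toMultiset (Finsupp.equivFunOnFinite.symm f)
  have hcount (k : Fin m) : s.count k = f k := Finsupp.count_toMultiset _ k
  have hcard : Multiset.card s = 2 := by
    simpa [s, Finsupp.card_toMultiset, Finsupp.sum_fintype] using hf
  obtain ⟨i, j, hij⟩ := Multiset.card_eq_two.1 hcard
  refine ⟨j, i, Subtype.ext (funext fun k => ?_)⟩
  change _ = f k
  rw [← hcount, hij]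
  simp [idx2, Pi.single_apply, Multiset.count_cons, Multiset.count_singleton]

lemma nij_ne_zero (i j : Fin m) : nij i j ≠ 0 := by
  unfold nij
  split_ifs <;> norm_num

def basU (α : Fin n) : Vph m n := (0, Pi.single α 1, 0, 0, 0, 0)
def basU1 (i : Fin m) (α : Fin n) : Vph m n := (0, 0, Pi.single i (Pi.single α 1), 0, 0, 0)
def basP : Vph m n := (0, 0, 0, 1, 0, 0)
def basP1 (i : Fin m) (α : Fin n) : Vph m n := (0, 0, 0, 0, Pi.single i (Pi.single α 1), 0)
def basP2 (I : Idx m 2) (α : Fin n) : Vph m n := (0, 0, 0, 0, 0, Pi.single I (Pi.single α 1))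

@[simp] lemma dxF_apply (i : Fin m) (u : Vph m n) : dxF i u = u.1 i := rfl
@[simp] lemma duF_apply (α : Fin n) (u : Vph m n) : duF α u = u.2.1 α := rfl
@[simp] lemma du1F_apply (i : Fin m) (α : Fin n) (u : Vph m n) : du1F i α u = u.2.2.1 i α := rfl
@[simp] lemma dpF_apply (u : Vph m n) : dpF u = u.2.2.2.1 := rfl
@[simp] lemma dp1F_apply (i : Fin m) (α : Fin n) (u : Vph m n) :
    dp1F i α u = u.2.2.2.2.1 i α := rfl
@[simp] lemma dp2F_apply (I : Idx m 2) (α : Fin n) (u : Vph m n) :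
    dp2F I α u = u.2.2.2.2.2 I α := rfl

lemma ctr_iotaD_mul (w : Vph m n) (f : Dph m n) (x : Eph m n) :
    ctr w (iotaD f * x) = f w • x - iotaD f * ctr w x :=
  CliffordAlgebra.contractLeft_ι_mul _ f x

lemma ctr_comm (w u : Vph m n) (x : Eph m n) : ctr w (ctr u x) = -ctr u (ctr w x) :=
  CliffordAlgebra.contractLeft_comm _ _ x

lemma ctr_iotaD_mul_iotaD_mul (w : Vph m n) (f g : Dph m n) (x : Eph m n) :
    ctr w (iotaD f * iotaD g * x) =
      f w • (iotaD g * x) - g w • (iotaD f * x) + iotaD f * iotaD g * ctr w x := by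
  rw [mul_assoc, ctr_iotaD_mul, ctr_iotaD_mul, mul_sub, mul_smul_comm, mul_assoc]
  abel

lemma dmx_eq_ιMulti : dmx m n = ExteriorAlgebra.ιMulti ℝ m dxF :=
  (ExteriorAlgebra.ιMulti_apply _).symm

lemma dmx_ne_zero : dmx m n ≠ 0 := by
  rw [dmx_eq_ιMulti]
  exact ExteriorAlgebra.ιMulti_ne_zero_of_dual _ (fun i => Module.Dual.eval ℝ _ (basX i))
    (fun i => by simp [basX]) (fun i j hij => by simp [basX, hij])

lemma iotaD_dxF_mul_ctr_dmx (w : Vph m n) (i : Fin m) :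
    iotaD (dxF i) * ctr w (dmx m n) = w.1 i • dmx m n := by
  have hsq : iotaD (dxF i) * dmx m n = 0 := ExteriorAlgebra.ι_mul_prod_list _ i
  have h := ctr_iotaD_mul w (dxF i) (dmx m n)
  rw [hsq, map_zero, dxF_apply, eq_comm, sub_eq_zero] at h
  exact h.symm

lemma ctr_dmx_eq_zero_iff (w : Vph m n) : ctr w (dmx m n) = 0 ↔ w.1 = 0 := by
  constructor
  · intro h
    funext i
    have hi := iotaD_dxF_mul_ctr_dmx w i
    rw [h, mul_zero, eq_comm, smul_eq_zero] at hi
    exact hi.resolve_right dmx_ne_zero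
  · intro h
    have := CliffordAlgebra.contractLeft_prod_map_ι_eq_zero (Q := 0) (Module.Dual.eval ℝ _ w)
      ((List.finRange m).map dxF) (by simp [h])
    simpa [dmx, iotaD, ctr, List.ofFn_eq_map, Function.comp_def] using this

lemma ctr_dm1x_of_fst_eq_zero {w : Vph m n} (hw : w.1 = 0) (j : Fin m) : ctr w (dm1x j) = 0 := by
  rw [dm1x, ctr_comm, (ctr_dmx_eq_zero_iff w).2 hw, map_zero, neg_zero]

lemma linearIndependent_dm1x : LinearIndependent ℝ (dm1x (m := m) (n := n)) := by
  refine Fintype.linearIndependent_iff.2 fun c hc i => ?_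
  have hi := congrArg (iotaD (dxF i) * ·) hc
  simp only [mul_zero, Finset.mul_sum, mul_smul_comm, dm1x, iotaD_dxF_mul_ctr_dmx, basX,
    Pi.single_apply, ite_smul, zero_smul, one_smul, smul_ite, smul_zero, Finset.sum_ite_eq,
    Finset.mem_univ, if_true] at hi
  exact (smul_eq_zero.1 hi).resolve_right dmx_ne_zero

lemma dual_eq_zero_of_apply_basX {f : Dph m n} (hx : ∀ k, f (basX k) = 0)
    (hrest : ∀ u : Vph m n, u.1 = 0 → f u = 0) : f = 0 := by
  refine LinearMap.ext fun ⟨a, rest⟩ => ?_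
  have hsplit : ((a, rest) : Vph m n) = ∑ k, a k • basX k + (0, rest) := by
    refine Prod.ext (funext fun i => ?_) (by simp [basX, Prod.snd_sum])
    simp [basX, Prod.fst_sum, Pi.single_apply]
  rw [hsplit, map_add, map_sum]
  simp [hx, hrest]

lemma eq_zero_of_smul_dmx_add_sum_eq_zero {q : ℝ} {θ : Fin m → Dph m n}
    (hθ : ∀ j k, θ j (basX k) = 0) (h : q • dmx m n + ∑ j, iotaD (θ j) * dm1x j = 0) :
    q = 0 ∧ θ = 0 := by
  have hrest (u : Vph m n) (hu : u.1 = 0) (j : Fin m) : θ j u = 0 := by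
    have hu' := congrArg (ctr u) h
    simp only [map_add, map_smul, map_sum, ctr_iotaD_mul, (ctr_dmx_eq_zero_iff u).2 hu,
      ctr_dm1x_of_fst_eq_zero hu, smul_zero, mul_zero, sub_zero, zero_add, map_zero] at hu'
    exact Fintype.linearIndependent_iff.1 linearIndependent_dm1x _ hu' j
  have hθ0 : θ = 0 := funext fun j => dual_eq_zero_of_apply_basX (hθ j) (fun u hu => hrest u hu j)
  refine ⟨?_, hθ0⟩
  simp only [hθ0, Pi.zero_apply, iotaD, map_zero, zero_mul, Finset.sum_const_zero, add_zero,
    smul_eq_zero] at h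
  exact h.resolve_right dmx_ne_zero

def contractOmegaCoeff (v : Vph m n) (j : Fin m) : Dph m n :=
  ∑ α, (v.2.2.2.2.1 j α • duF α - v.2.1 α • dp1F j α)
    + ∑ α, ∑ i, (nij i j)⁻¹ •
        (v.2.2.2.2.2 (idx2 i j) α • du1F i α - v.2.2.1 i α • dp2F (idx2 i j) α)

lemma ctr_OmegaF_of_fst_eq_zero {w : Vph m n} (hw : w.1 = 0) :
    ctr w (OmegaF m n) =
      -(w.2.2.2.1 • dmx m n + ∑ j, iotaD (contractOmegaCoeff w j) * dm1x j) := by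
  simp only [OmegaF, map_neg, map_sub, map_sum, map_smul, ctr_iotaD_mul,
    ctr_iotaD_mul_iotaD_mul, ctr_dm1x_of_fst_eq_zero hw, (ctr_dmx_eq_zero_iff w).2 hw, mul_zero,
    sub_zero, add_zero, dpF_apply, dp1F_apply, duF_apply, du1F_apply, dp2F_apply]
  simp only [contractOmegaCoeff, iotaD, map_add, map_sub, map_sum, map_smul, Finset.sum_mul,
    add_mul, sub_mul, smul_mul_assoc, Finset.sum_add_distrib, smul_sub]
  rw [Finset.sum_comm (γ := Fin n) (α := Fin m), Finset.sum_comm_cycle]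
  abel

section contractOmegaCoeff
variable (v : Vph m n) (j : Fin m)

lemma contractOmegaCoeff_apply_basX (k : Fin m) : contractOmegaCoeff v j (basX k) = 0 := by
  simp [contractOmegaCoeff, basX]

lemma contractOmegaCoeff_apply_basU (α : Fin n) :
    contractOmegaCoeff v j (basU α) = v.2.2.2.2.1 j α := by
  simp [contractOmegaCoeff, basU, Pi.single_apply]

lemma contractOmegaCoeff_apply_basU1 (i : Fin m) (α : Fin n) :
    contractOmegaCoeff v j (basU1 i α) = (nij i j)⁻¹ * v.2.2.2.2.2 (idx2 i j) α := by
  simp [contractOmegaCoeff, basU1, Pi.single_apply, ite_apply]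

lemma contractOmegaCoeff_apply_basP1 (α : Fin n) :
    contractOmegaCoeff v j (basP1 j α) = -v.2.1 α := by
  simp [contractOmegaCoeff, basP1, Pi.single_apply]

lemma contractOmegaCoeff_apply_basP2_idx2_self (α : Fin n) :
    contractOmegaCoeff v j (basP2 (idx2 j j) α) = -v.2.2.1 j α := by
  simp [contractOmegaCoeff, basP2, Pi.single_apply, ite_apply, idx2_eq_idx2_self_iff, nij]

end contractOmegaCoeff

lemma ctr_basP_OmegaF : ctr basP (OmegaF m n) = -dmx m n := by
  rw [ctr_OmegaF_of_fst_eq_zero rfl]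
  simp [contractOmegaCoeff, basP, iotaD]

end

theorem statement9_general (m n : ℕ) (hm : 0 < m) (v : Vph m n)
    (hv : ctr v (OmegaF m n) = 0) : v = 0 := by
  have hdmx : ctr v (dmx m n) = 0 := by
    rw [← neg_neg (dmx m n), ← ctr_basP_OmegaF, map_neg, ctr_comm, hv, map_zero, neg_zero,
      neg_zero]
  have hx : v.1 = 0 := (ctr_dmx_eq_zero_iff v).1 hdmx
  rw [ctr_OmegaF_of_fst_eq_zero hx, neg_eq_zero] at hv
  obtain ⟨hp, hθ⟩ :=
    eq_zero_of_smul_dmx_add_sum_eq_zero (contractOmegaCoeff_apply_basX v) hv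
  have hθ' (j : Fin m) (u : Vph m n) : contractOmegaCoeff v j u = 0 := by rw [hθ]; rfl
  obtain ⟨x, u, u1, p, p1, p2⟩ := v
  have hu : u = 0 := funext fun α => by
    simpa [contractOmegaCoeff_apply_basP1] using hθ' ⟨0, hm⟩ (basP1 ⟨0, hm⟩ α)
  have hu1 : u1 = 0 := funext fun j => funext fun α => by
    simpa [contractOmegaCoeff_apply_basP2_idx2_self] using hθ' j (basP2 (idx2 j j) α)
  have hp1 : p1 = 0 := funext fun j => funext fun α => by
    simpa [contractOmegaCoeff_apply_basU] using hθ' j (basU α)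
  have hp2 : p2 = 0 := funext fun I => funext fun α => by
    obtain ⟨i, j, rfl⟩ := exists_idx2_eq I
    simpa [contractOmegaCoeff_apply_basU1, nij_ne_zero] using hθ' j (basU1 i α)
  simp only [Prod.mk_eq_zero]
  exact ⟨hx, hu, hu1, hp, hp1, hp2⟩

/-- the form `Ω` is 1-nondegenerate: `ι_v Ω = 0` implies `v = 0`. -/
theorem statement9 (m n : ℕ) (hm : 0 < m) (hn : 0 < n) (v : Vph m n)
    (hv : ctr v (OmegaF m n) = 0) : v = 0 :=
  statement9_general m n hm v hv
end
end

section
/- Let q ∈ ℝ. A smooth function u : ℝ² → ℝ (coordinates (x, y)) satisfies the clamped-plate equation ∂⁴u/∂x⁴ + 2∂⁴u/∂x²∂y² + ∂⁴u/∂y⁴ = q on ℝ² if and only if there exist smooth functions u₁, u₂, p¹, p², p²⁰, p¹¹, p⁰² : ℝ² → ℝ satisfying on all of ℝ² the first-order system: ∂u/∂x = u₁, ∂u/∂y = u₂, ∂u₁/∂x = p²⁰, ∂u₁/∂y + ∂u₂/∂x = p¹¹, ∂u₂/∂y = p⁰², ∂p¹/∂x + ∂p²/∂y + q = 0, ∂p²⁰/∂x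 + ½ ∂p¹¹/∂y + p¹ = 0, and ½ ∂p¹¹/∂x + ∂p⁰²/∂y + p² = 0. -/
/-!
The first five equations force `u₁ = u_x`, `u₂ = u_y`, `p²⁰ = u_xx`, `p¹¹ = u_yx + u_xy` and
`p⁰² = u_yy`, and the last two express `p¹` and `p²` through these. Differentiating the last
two and using the symmetry of second derivatives (of `p¹¹` and of `u`) turns the remaining
equation `∂ₓp¹ + ∂_y p² + q = 0` into `u_xxxx + 2u_xxyy + u_yyyy = q`. Conversely, for a
solution `u` these formulas define smooth fields solving the system.
-/

noncomputable section

/-- Partial derivative in the first coordinate (`x`) on `ℝ²`. -/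
def pdx (f : ℝ × ℝ → ℝ) : ℝ × ℝ → ℝ := fun z => fderiv ℝ f z (1, 0)
/-- Partial derivative in the second coordinate (`y`) on `ℝ²`. -/
def pdy (f : ℝ × ℝ → ℝ) : ℝ × ℝ → ℝ := fun z => fderiv ℝ f z (0, 1)

theorem fderiv_fderiv_apply_comm {E F : Type*} [NormedAddCommGroup E] [NormedSpace ℝ E]
    [NormedAddCommGroup F] [NormedSpace ℝ F] {f : E → F} {x : E} (hf : ContDiffAt ℝ 2 f x)
    (v w : E) :
    fderiv ℝ (fun y => fderiv ℝ f y v) x w = fderiv ℝ (fun y => fderiv ℝ f y w) x v := by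
  have hf' : DifferentiableAt ℝ (fderiv ℝ f) x :=
    (hf.fderiv_right (m := 1) le_rfl).differentiableAt one_ne_zero
  rw [fderiv_clm_apply hf' (differentiableAt_const v),
    fderiv_clm_apply hf' (differentiableAt_const w)]
  simpa using (hf.isSymmSndFDerivAt (by simp)).eq w v

variable {f g : ℝ × ℝ → ℝ}

theorem pdx_pdy_comm (hf : ContDiff ℝ 2 f) : pdx (pdy f) = pdy (pdx f) :=
  funext fun _ => fderiv_fderiv_apply_comm hf.contDiffAt _ _

theorem ContDiff.pdx (hf : ContDiff ℝ (⊤ : ℕ∞) f) : ContDiff ℝ (⊤ : ℕ∞) (pdx f) :=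
  (hf.fderiv_right (m := (⊤ : ℕ∞)) (by norm_cast)).clm_apply contDiff_const

theorem ContDiff.pdy (hf : ContDiff ℝ (⊤ : ℕ∞) f) : ContDiff ℝ (⊤ : ℕ∞) (pdy f) :=
  (hf.fderiv_right (m := (⊤ : ℕ∞)) (by norm_cast)).clm_apply contDiff_const

theorem pdx_zero : pdx 0 = 0 := by
  funext
  simp [pdx]

theorem pdy_zero : pdy 0 = 0 := by
  funext
  simp [pdy]

theorem pdx_add (hf : Differentiable ℝ f) (hg : Differentiable ℝ g) :
    pdx (f + g) = pdx f + pdx g := by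
  funext z
  simp [pdx, fderiv_add (hf z) (hg z)]

theorem pdy_add (hf : Differentiable ℝ f) (hg : Differentiable ℝ g) :
    pdy (f + g) = pdy f + pdy g := by
  funext z
  simp [pdy, fderiv_add (hf z) (hg z)]

theorem pdx_const_smul (c : ℝ) (hf : Differentiable ℝ f) : pdx (c • f) = c • pdx f := by
  funext z
  simp [pdx, fderiv_const_smul (hf z) c]

theorem pdy_const_smul (c : ℝ) (hf : Differentiable ℝ f) : pdy (c • f) = c • pdy f := by
  funext z
  simp [pdy, fderiv_const_smul (hf z) c]

def bilaplacian (u : ℝ × ℝ → ℝ) (z : ℝ × ℝ) : ℝ :=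
  pdx (pdx (pdx (pdx u))) z + 2 * pdx (pdx (pdy (pdy u))) z + pdy (pdy (pdy (pdy u))) z

section Smooth

variable {u p1 p2 p20 p11 p02 : ℝ × ℝ → ℝ}

theorem pdx_add_pdy_eq_of_momenta (hp1 : ContDiff ℝ (⊤ : ℕ∞) p1)
    (hp2 : ContDiff ℝ (⊤ : ℕ∞) p2) (hp20 : ContDiff ℝ (⊤ : ℕ∞) p20)
    (hp11 : ContDiff ℝ (⊤ : ℕ∞) p11) (hp02 : ContDiff ℝ (⊤ : ℕ∞) p02)
    (h1 : ∀ z, pdx p20 z + 1 / 2 * pdy p11 z + p1 z = 0)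
    (h2 : ∀ z, 1 / 2 * pdx p11 z + pdy p02 z + p2 z = 0) (z : ℝ × ℝ) :
    pdx p1 z + pdy p2 z = -(pdx (pdx p20) z + pdx (pdy p11) z + pdy (pdy p02) z) := by
  have e1 : pdx p20 + (1 / 2 : ℝ) • pdy p11 + p1 = 0 := funext h1
  have e2 : (1 / 2 : ℝ) • pdx p11 + pdy p02 + p2 = 0 := funext h2
  have : Differentiable ℝ p1 := hp1.differentiable (by simp)
  have : Differentiable ℝ p2 := hp2.differentiable (by simp)
  have : Differentiable ℝ (pdx p20) := hp20.pdx.differentiable (by simp)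
  have : Differentiable ℝ (pdx p11) := hp11.pdx.differentiable (by simp)
  have : Differentiable ℝ (pdy p11) := hp11.pdy.differentiable (by simp)
  have : Differentiable ℝ (pdy p02) := hp02.pdy.differentiable (by simp)
  have d1 := congrFun (congrArg pdx e1) z
  have d2 := congrFun (congrArg pdy e2) z
  rw [pdx_add, pdx_add, pdx_const_smul, pdx_zero] at d1
  rw [pdy_add, pdy_add, pdy_const_smul, pdy_zero] at d2
  all_goals try fun_prop
  simp only [Pi.add_apply, Pi.smul_apply, smul_eq_mul, Pi.zero_apply] at d1 d2
  rw [pdx_pdy_comm (hp11.of_le (by norm_cast))] at d1 ⊢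
  linarith

theorem pdx_add_pdy_eq_bilaplacian (hu : ContDiff ℝ (⊤ : ℕ∞) u) (z : ℝ × ℝ) :
    pdx (pdx (pdx (pdx u))) z + pdx (pdy (pdy (pdx u) + pdx (pdy u))) z
      + pdy (pdy (pdy (pdy u))) z = bilaplacian u z := by
  rw [← pdx_pdy_comm (hu.of_le (by norm_cast)),
    pdy_add (hu.pdy.pdx.differentiable (by simp)) (hu.pdy.pdx.differentiable (by simp)),
    pdx_add (hu.pdy.pdx.pdy.differentiable (by simp)) (hu.pdy.pdx.pdy.differentiable (by simp)),
    ← pdx_pdy_comm (hu.pdy.of_le (by norm_cast))]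
  simp only [bilaplacian, Pi.add_apply]
  ring

end Smooth

/-- a smooth `u` satisfies the clamped-plate equation
`u_xxxx + 2u_xxyy + u_yyyy = q` iff there are smooth functions
`u₁, u₂, p¹, p², p²⁰, p¹¹, p⁰²` solving the first-order unified
(Lagrangian–Hamiltonian) system of the plate Lagrangian. -/
theorem statement13 (q : ℝ) (u : ℝ × ℝ → ℝ) (hu : ContDiff ℝ (⊤ : ℕ∞) u) :
    (∀ z : ℝ × ℝ,
        pdx (pdx (pdx (pdx u))) z + 2 * pdx (pdx (pdy (pdy u))) z
          + pdy (pdy (pdy (pdy u))) z = q)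
      ↔ ∃ u1 u2 p1 p2 p20 p11 p02 : ℝ × ℝ → ℝ,
          ContDiff ℝ (⊤ : ℕ∞) u1 ∧ ContDiff ℝ (⊤ : ℕ∞) u2 ∧
          ContDiff ℝ (⊤ : ℕ∞) p1 ∧ ContDiff ℝ (⊤ : ℕ∞) p2 ∧
          ContDiff ℝ (⊤ : ℕ∞) p20 ∧ ContDiff ℝ (⊤ : ℕ∞) p11 ∧
          ContDiff ℝ (⊤ : ℕ∞) p02 ∧
          ∀ z : ℝ × ℝ,
            pdx u z = u1 z ∧ pdy u z = u2 z ∧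
            pdx u1 z = p20 z ∧ pdy u1 z + pdx u2 z = p11 z ∧ pdy u2 z = p02 z ∧
            pdx p1 z + pdy p2 z + q = 0 ∧
            pdx p20 z + (1 / 2) * pdy p11 z + p1 z = 0 ∧
            (1 / 2) * pdx p11 z + pdy p02 z + p2 z = 0 := by
  change (∀ z, bilaplacian u z = q) ↔ _
  constructor
  · intro hpde
    set p11 := pdy (pdx u) + pdx (pdy u)
    have hp11 : ContDiff ℝ (⊤ : ℕ∞) p11 := hu.pdx.pdy.add hu.pdy.pdx
    set p1 : ℝ × ℝ → ℝ := fun z => -(pdx (pdx (pdx u)) z + 1 / 2 * pdy p11 z)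
    set p2 : ℝ × ℝ → ℝ := fun z => -(1 / 2 * pdx p11 z + pdy (pdy (pdy u)) z)
    have hp1 : ContDiff ℝ (⊤ : ℕ∞) p1 :=
      (hu.pdx.pdx.pdx.add (contDiff_const.mul hp11.pdy)).neg
    have hp2 : ContDiff ℝ (⊤ : ℕ∞) p2 :=
      ((contDiff_const.mul hp11.pdx).add hu.pdy.pdy.pdy).neg
    have h1 : ∀ z, pdx (pdx (pdx u)) z + 1 / 2 * pdy p11 z + p1 z = 0 := fun z => by simp [p1]
    have h2 : ∀ z, 1 / 2 * pdx p11 z + pdy (pdy (pdy u)) z + p2 z = 0 := fun z => by simp [p2]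
    refine ⟨pdx u, pdy u, p1, p2, pdx (pdx u), p11, pdy (pdy u), hu.pdx, hu.pdy, hp1, hp2,
      hu.pdx.pdx, hp11, hu.pdy.pdy, fun z => ⟨rfl, rfl, rfl, rfl, rfl, ?_, h1 z, h2 z⟩⟩
    linarith [pdx_add_pdy_eq_of_momenta hp1 hp2 hu.pdx.pdx hp11 hu.pdy.pdy h1 h2 z,
      pdx_add_pdy_eq_bilaplacian hu z, hpde z]
  · rintro ⟨u1, u2, p1, p2, p20, p11, p02, -, -, hp1, hp2, hp20, hp11, hp02, h⟩ z
    obtain rfl : u1 = pdx u := funext fun z => (h z).1.symm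
    obtain rfl : u2 = pdy u := funext fun z => (h z).2.1.symm
    obtain rfl : p20 = pdx (pdx u) := funext fun z => (h z).2.2.1.symm
    obtain rfl : p11 = pdy (pdx u) + pdx (pdy u) := funext fun z => (h z).2.2.2.1.symm
    obtain rfl : p02 = pdy (pdy u) := funext fun z => (h z).2.2.2.2.1.symm
    linarith [(h z).2.2.2.2.2.1, pdx_add_pdy_eq_bilaplacian hu z,
      pdx_add_pdy_eq_of_momenta hp1 hp2 hp20 hp11 hp02 (fun z => (h z).2.2.2.2.2.2.1)
        (fun z => (h z).2.2.2.2.2.2.2) z]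
end
end
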